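/- Canonical names for finite-type objects are injective and absolute: for a pca A over 𝔽 and every finite type σ, (i) the name ẋ is injective for every x ∈ F_σ; (ii) the name Ḟ_σ is injective; (iii) if some a ∈ A realizes ẋ = ẏ for x, y ∈ F_σ, then x = y. -/

import Mathlib

/-- The von Neumann numeral of `n`. -/
def natEmbed : ℕ → ZFSet
  | 0 => ∅
  | n + 1 => insert (natEmbed n) (natEmbed n)

/-- Finite types: the ground type `o` and arrow types `(σ)τ`. -/
inductive FType : Type
  | o : FType
  | arrow : FType → FType → FType

/-- The set-theoretic extension of a finite type: `F_o = ω` and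
`F_{(σ)τ}` is the set of all total (set) functions from `F_σ` to `F_τ`. -/
def Fext : FType → ZFSet
  | .o => ZFSet.omega
  | .arrow σ τ => ZFSet.funs (Fext σ) (Fext τ)

/-- Lifting of a partial binary application to `Option`. -/
def oap {A : Type} (app : A → A → Option A) (x y : Option A) : Option A :=
  x.bind fun a => y.bind fun b => app a b

/-- A partial combinatory algebra, together with chosen pairing and projection
combinators (which exist in any pca). -/
structure PCA (A : Type) where
  app : A → A → Option A
  k : A
  s : A
  pairc : A
  pr0 : A
  pr1 : A
  nontrivial : ∃ a b : A, a ≠ b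
  k_def : ∀ a : A, (app k a).isSome
  s_def : ∀ a : A, (app s a).isSome
  s2_def : ∀ a b : A, (oap app (app s a) (some b)).isSome
  k_spec : ∀ a b : A, oap app (app k a) (some b) = some a
  s_spec : ∀ a b c : A, oap app (oap app (app s a) (some b)) (some c)
      = oap app (oap app (some a) (some c)) (oap app (some b) (some c))
  pair_def : ∀ a b : A, (oap app (app pairc a) (some b)).isSome
  pr0_spec : ∀ a b : A, oap app (some pr0) (oap app (app pairc a) (some b)) = some a
  pr1_spec : ∀ a b : A, oap app (some pr1) (oap app (app pairc a) (some b)) = some b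
/-- Names in the realizability structure `V_tr(A)`: a name is a pair
`⟨x, x̂⟩` of a set `x` together with a family (the set `x̂ ⊆ A × V_tr(A)`) of
labelled names. -/
inductive VName (A : Type) : Type 2
  | mk (deg : ZFSet.{0}) (ι : Type 1) (lab : ι → A) (elt : ι → VName A)

/-- The truth component `x°` (first component) of a name. -/
def VName.deg {A : Type} : VName A → ZFSet
  | .mk x _ _ _ => x

/-- The index type of the second component `x*` of a name. -/
def VName.ι {A : Type} : VName A → Type 1
  | .mk _ i _ _ => i

/-- The labels (realizers) of the second component `x*`. -/
def VName.lab {A : Type} : (v : VName A) → v.ι → A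
  | .mk _ _ l _ => l

/-- The members of the second component `x*`. -/
def VName.elt {A : Type} : (v : VName A) → v.ι → VName A
  | .mk _ _ _ e => e

/-- A pair `⟨x, x̂⟩` is a genuine member of `V_tr(A)` when, hereditarily,
`u° ∈ x` for every `⟨a,u⟩ ∈ x̂`. -/
def VName.IsName {A : Type} : VName A → Prop
  | .mk x _ _ e => (∀ i, (e i).deg ∈ x) ∧ ∀ i, (e i).IsName
mutual
/-- Atomic realizability with truth for equality: `a ⊩ x = y` iff `x° = y°`,
every `⟨b,z⟩ ∈ x*` yields `(a·b)₀ ⊩ z ∈ y`, and every `⟨b,z⟩ ∈ y*` yields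
`(a·b)₁ ⊩ z ∈ x`.  (The witnessing applications are given by the functions
`bf, cf, bg, cg`.) -/
inductive RealEq {A : Type} (P : PCA A) : A → VName A → VName A → Prop
  | intro (a : A) (x y : VName A)
      (bf cf : x.ι → A) (bg cg : y.ι → A) :
      x.deg = y.deg →
      (∀ i : x.ι, P.app a (x.lab i) = some (bf i)) →
      (∀ i : x.ι, P.app P.pr0 (bf i) = some (cf i)) →
      (∀ i : x.ι, RealMem P (cf i) (x.elt i) y) →
      (∀ j : y.ι, P.app a (y.lab j) = some (bg j)) →
      (∀ j : y.ι, P.app P.pr1 (bg j) = some (cg j)) →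
      (∀ j : y.ι, RealMem P (cg j) (y.elt j) x) →
      RealEq P a x y

/-- Atomic realizability with truth for membership: `a ⊩ x ∈ y` iff
`x° ∈ y°` and there is `⟨a₀,z⟩ ∈ y*` with `a₁ ⊩ x = z`. -/
inductive RealMem {A : Type} (P : PCA A) : A → VName A → VName A → Prop
  | intro (a : A) (x y : VName A) (j : y.ι) (c : A) :
      x.deg ∈ y.deg →
      P.app P.pr0 a = some (y.lab j) →
      P.app P.pr1 a = some c →
      RealEq P c x (y.elt j) →
      RealMem P a x y
end
/-- A pca over `𝔽`: a pca with a one-to-one map `x ↦ x̄` from `𝔽 = ⋃_σ F_σ`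
into `A` respecting application, together with numeral combinators. -/
structure PCAF (A : Type) extends PCA A where
  bar : ZFSet → A
  bar_inj : ∀ u v : ZFSet, (∃ σ, u ∈ Fext σ) → (∃ τ, v ∈ Fext τ) →
    bar u = bar v → u = v
  bar_app : ∀ (σ τ : FType) (f x y : ZFSet), f ∈ Fext (.arrow σ τ) →
    x ∈ Fext σ → ZFSet.pair x y ∈ f → app (bar f) (bar x) = some (bar y)
  succ : A
  predc : A
  d : A
  succ_spec : ∀ n : ℕ, app succ (bar (natEmbed n)) = some (bar (natEmbed (n + 1)))
  pred_spec : ∀ n : ℕ, app predc (bar (natEmbed (n + 1))) = some (bar (natEmbed n))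
  d_spec : ∀ (n m : ℕ) (a b : A),
    oap app (oap app (oap app (app d (bar (natEmbed n)))
        (some (bar (natEmbed m)))) (some a)) (some b)
      = some (if n = m then a else b)
/-- Internal singleton `{x}_int = ⟨{x°}, {⟨0,x⟩}⟩`. -/
noncomputable def vSing {A : Type} (zero : A) (x : VName A) : VName A :=
  VName.mk ({x.deg} : ZFSet) (ULift Unit) (fun _ => zero) (fun _ => x)

/-- Internal doubleton `{x,y}_int = ⟨{x°,y°}, {⟨0,x⟩,⟨1,y⟩}⟩`. -/
noncomputable def vDoub {A : Type} (zero one : A) (x y : VName A) : VName A :=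
  VName.mk ({x.deg, y.deg} : ZFSet) (ULift Bool)
    (fun b => if b.down then one else zero)
    (fun b => if b.down then y else x)

/-- Internal ordered pair
`⟨x,y⟩_int = ⟨⟨x°,y°⟩, {⟨0,{x}_int⟩, ⟨1,{x,y}_int⟩}⟩`. -/
noncomputable def vPair {A : Type} (zero one : A) (x y : VName A) : VName A :=
  VName.mk (ZFSet.pair x.deg y.deg) (ULift Bool)
    (fun b => if b.down then one else zero)
    (fun b => if b.down then vDoub zero one x y else vSing zero x)
/-- The canonical name of a set: `ẋ = ⟨x, {⟨ȳ, ẏ⟩ | y ∈ x}⟩` (by `∈`-recursion);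
for `n ∈ ω` this is `ṅ = ⟨n, {⟨m̄, ṁ⟩ | m < n}⟩`. -/
noncomputable def dotSet {A : Type} (P : PCAF A) : ZFSet → VName A :=
  WellFounded.fix ZFSet.mem_wf fun x ih =>
    VName.mk x {y : ZFSet // y ∈ x} (fun y => P.bar y.1) (fun y => ih y.1 y.2)

/-- Canonical names for finite-type objects: `ẋ` for `x` of type `o` is the
canonical name of the natural number `x`, and
`ḟ = ⟨f, {⟨x̄, ⟨ẋ,ẏ⟩_int⟩ | x ∈ F_σ, f(x) = y}⟩` for `f` of type `(σ)τ`. -/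
noncomputable def dotFT {A : Type} (P : PCAF A) : FType → ZFSet → VName A
  | .o, x => dotSet P x
  | .arrow σ τ, f =>
      VName.mk f {p : ZFSet × ZFSet // p.1 ∈ Fext σ ∧ ZFSet.pair p.1 p.2 ∈ f}
        (fun p => P.bar p.1.1)
        (fun p => vPair (P.bar (natEmbed 0)) (P.bar (natEmbed 1))
          (dotFT P σ p.1.1) (dotFT P τ p.1.2))

/-- The canonical name `Ḟ_σ = ⟨F_σ, {⟨x̄, ẋ⟩ | x ∈ F_σ}⟩`. -/
noncomputable def dotF {A : Type} (P : PCAF A) (σ : FType) : VName A :=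
  VName.mk (Fext σ) {x : ZFSet // x ∈ Fext σ} (fun x => P.bar x.1)
    (fun x => dotFT P σ x.1)
/-- A name `x ∈ V_tr(A)` is injective if (i) `x° = {u° | ∃a ⟨a,u⟩ ∈ x*}` and
(ii) for `⟨a,u⟩, ⟨b,v⟩ ∈ x*`, `a = b` iff `u° = v°`. -/
def InjectiveName {A : Type} (v : VName A) : Prop :=
  (∀ z : ZFSet, z ∈ v.deg ↔ ∃ i : v.ι, (v.elt i).deg = z) ∧
  ∀ i j : v.ι, (v.lab i = v.lab j ↔ (v.elt i).deg = (v.elt j).deg)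


/-!
The truth component of a canonical name is the object it names, `(ẋ)° = x`, and realizing
`ẋ = ẏ` requires `(ẋ)° = (ẏ)°`; this gives absoluteness at once. Injectivity of `ẋ` and `Ḟ_σ`
reduces to injectivity of `x ↦ x̄` on each `F_σ`: for `x ∈ ω` because `ω` is transitive, and for
`f ∈ F_{(σ)τ}` because a function graph has at most one pair with a given first component.
-/

theorem ZFSet.exists_eq_ofNat_of_mem_omega {x : ZFSet} (hx : x ∈ ZFSet.omega) :
    ∃ n, x = ZFSet.mk (PSet.ofNat n) := by
  induction x using Quotient.inductionOn with
  | _ p =>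
    obtain ⟨⟨n⟩, hn⟩ := ZFSet.mk_mem_iff.mp hx
    exact ⟨n, ZFSet.sound hn⟩

theorem ZFSet.ofNat_mem_omega (n : ℕ) : ZFSet.mk (PSet.ofNat n) ∈ ZFSet.omega :=
  ZFSet.mk_mem_iff.mpr ⟨⟨n⟩, PSet.Equiv.refl _⟩

theorem ZFSet.mem_omega_of_mem_ofNat :
    ∀ (n : ℕ) {y : ZFSet}, y ∈ ZFSet.mk (PSet.ofNat n) → y ∈ ZFSet.omega
  | 0, y, hy => absurd hy (ZFSet.notMem_empty y)
  | n + 1, y, hy => by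
    rcases ZFSet.mem_insert_iff.mp
      (show y ∈ insert (ZFSet.mk (PSet.ofNat n)) (ZFSet.mk (PSet.ofNat n)) from hy) with rfl | hy
    · exact ZFSet.ofNat_mem_omega n
    · exact ZFSet.mem_omega_of_mem_ofNat n hy

theorem ZFSet.isTransitive_omega : ZFSet.omega.IsTransitive := fun x hx y hy => by
  obtain ⟨n, rfl⟩ := ZFSet.exists_eq_ofNat_of_mem_omega hx
  exact ZFSet.mem_omega_of_mem_ofNat n hy

section InjectiveName

variable {A : Type}

theorem injectiveName_mk_iff {S : ZFSet} {ι : Type 1} {lab : ι → A} {elt : ι → VName A} :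
    InjectiveName (VName.mk S ι lab elt) ↔
      (∀ z : ZFSet, z ∈ S ↔ ∃ i, (elt i).deg = z) ∧
      ∀ i j, lab i = lab j ↔ (elt i).deg = (elt j).deg :=
  Iff.rfl

theorem injectiveName_mk_subtype {S : ZFSet} {lab : ZFSet → A} (hlab : Set.InjOn lab S)
    {elt : {y : ZFSet // y ∈ S} → VName A} (helt : ∀ y, (elt y).deg = y.1) :
    InjectiveName (VName.mk S {y : ZFSet // y ∈ S} (fun y => lab y.1) elt) := by
  refine injectiveName_mk_iff.2 ⟨fun z => ⟨fun hz => ⟨⟨z, hz⟩, helt _⟩, ?_⟩, fun i j => ?_⟩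
  · rintro ⟨i, rfl⟩
    simpa only [helt] using i.2
  · rw [helt, helt]
    exact ⟨fun h => hlab i.2 j.2 h, fun h => h ▸ rfl⟩

theorem injectiveName_mk_graph {X Y f : ZFSet} (hf : ZFSet.IsFunc X Y f) {lab : ZFSet → A}
    (hlab : Set.InjOn lab X)
    {elt : {p : ZFSet × ZFSet // p.1 ∈ X ∧ ZFSet.pair p.1 p.2 ∈ f} → VName A}
    (helt : ∀ p, (elt p).deg = ZFSet.pair p.1.1 p.1.2) :
    InjectiveName (VName.mk f {p : ZFSet × ZFSet // p.1 ∈ X ∧ ZFSet.pair p.1 p.2 ∈ f}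
      (fun p => lab p.1.1) elt) := by
  refine injectiveName_mk_iff.2 ⟨fun z => ⟨fun hz => ?_, ?_⟩, fun i j => ?_⟩
  · obtain ⟨a, ha, b, -, rfl⟩ := ZFSet.mem_prod.mp (hf.1 hz)
    exact ⟨⟨(a, b), ha, hz⟩, helt _⟩
  · rintro ⟨p, rfl⟩
    simpa only [helt] using p.2.2
  · rw [helt, helt, ZFSet.pair_inj]
    refine ⟨fun h => ?_, fun h => h.1 ▸ rfl⟩
    have hfst : i.1.1 = j.1.1 := hlab i.2.1 j.2.1 h
    obtain ⟨_, -, huniq⟩ := hf.2 i.1.1 i.2.1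
    exact ⟨hfst, (huniq _ i.2.2).trans (huniq _ (hfst ▸ j.2.2)).symm⟩

end InjectiveName

theorem RealEq.deg_eq {A : Type} {P : PCA A} {a : A} {x y : VName A} (h : RealEq P a x y) :
    x.deg = y.deg := by
  cases h
  assumption

section CanonicalNames

variable {A : Type} (P : PCAF A)

theorem PCAF.injOn_bar (σ : FType) : Set.InjOn P.bar (Fext σ) :=
  fun u hu v hv => P.bar_inj u v ⟨σ, hu⟩ ⟨σ, hv⟩

theorem dotSet_eq (x : ZFSet) :
    dotSet P x = VName.mk x {y : ZFSet // y ∈ x} (fun y => P.bar y.1)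
      (fun y => dotSet P y.1) :=
  WellFounded.fix_eq _ _ _

@[simp]
theorem dotSet_deg (x : ZFSet) : (dotSet P x).deg = x := by
  rw [dotSet_eq]
  rfl

@[simp]
theorem dotFT_deg (σ : FType) (x : ZFSet) : (dotFT P σ x).deg = x := by
  cases σ with
  | o => exact dotSet_deg P x
  | arrow σ τ => rfl

theorem injectiveName_dotFT {σ : FType} {x : ZFSet} (hx : x ∈ Fext σ) :
    InjectiveName (dotFT P σ x) := by
  cases σ with
  | o =>
    show InjectiveName (dotSet P x)
    rw [dotSet_eq]
    exact injectiveName_mk_subtype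
      ((P.injOn_bar .o).mono fun _ hy => ZFSet.isTransitive_omega x hx hy) fun y => dotSet_deg P y
  | arrow σ τ =>
    exact injectiveName_mk_graph (ZFSet.mem_funs.mp hx) (P.injOn_bar σ) fun p => by
      show ZFSet.pair (dotFT P σ p.1.1).deg (dotFT P τ p.1.2).deg = _
      rw [dotFT_deg, dotFT_deg]

theorem injectiveName_dotF (σ : FType) : InjectiveName (dotF P σ) :=
  injectiveName_mk_subtype (P.injOn_bar σ) fun x => dotFT_deg P σ x

theorem eq_of_realEq_dotFT {σ : FType} {a : A} {x y : ZFSet}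
    (h : RealEq P.toPCA a (dotFT P σ x) (dotFT P σ y)) : x = y := by
  simpa only [dotFT_deg] using h.deg_eq

end CanonicalNames

/-- For a pca `A` over `𝔽` and every finite type `σ`: (i) `ẋ` is injective for
every `x ∈ F_σ`; (ii) `Ḟ_σ` is injective; (iii) if some `a ∈ A` realizes
`ẋ = ẏ` for `x, y ∈ F_σ`, then `x = y` (absoluteness). -/
theorem dot_injective_absolute {A : Type} (P : PCAF A) (σ : FType) :
    (∀ x : ZFSet, x ∈ Fext σ → InjectiveName (dotFT P σ x)) ∧
    InjectiveName (dotF P σ) ∧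
    (∀ x y : ZFSet, x ∈ Fext σ → y ∈ Fext σ →
      (∃ a : A, RealEq P.toPCA a (dotFT P σ x) (dotFT P σ y)) → x = y) :=
  ⟨fun _ hx => injectiveName_dotFT P hx, injectiveName_dotF P σ,
    fun _ _ _ _ ⟨_, h⟩ => eq_of_realEq_dotFT P h⟩
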